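/- Let r ≥ 1, R ⊆ {1,…,n−1}, and σ ∈ S_n. Then, as formal power series in q_1,…,q_r: (q_r;q_r)_n · Σ_{Z ∈ (ℕ^r)^n with σ_R(Z) = σ} q^Z = Σ_{S ∈ (ℕ^{r−1})^n} q_r^{Comaj_{R,S}(σ)} q^S = Σ_{S ∈ (ℕ^{r−1})^n} q^{Z_{R,σ}(S)}. -/

import Mathlib

open scoped Classical

namespace RomeroComaj

noncomputable section

/-- `Seq r` is `ℕ^r`, the type of sequences of natural numbers of length `r`. -/
abbrev Seq (r : ℕ) := Fin r → ℕ

/-- strict lexicographic order on `ℕ^r`. -/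
def lexLt {r : ℕ} (a b : Seq r) : Prop :=
  ∃ i : Fin r, (∀ j : Fin r, j < i → a j = b j) ∧ a i < b i

/-- weak lexicographic order on `ℕ^r`. -/
def lexLe {r : ℕ} (a b : Seq r) : Prop :=
  lexLt a b ∨ a = b

/-- `RNbr R a b` : the (1-indexed) indices `a` and `b` are `R`-neighbors,
i.e. (for `a < b`) all of `a, a+1, …, b-1` lie in `R`. -/
def RNbr (R : Finset ℕ) (a b : ℕ) : Prop :=
  ∀ t ∈ Finset.Ico (min a b) (max a b), t ∈ R

/-- the value `σ_i` of the one-line notation of `σ`, both position `i` and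
the value being 1-indexed (junk value `0` outside `1 ≤ i ≤ n`). -/
def pget {n : ℕ} (σ : Equiv.Perm (Fin n)) (i : ℕ) : ℕ :=
  if h : i - 1 < n then (σ ⟨i - 1, h⟩).val + 1 else 0

/-- the sequence `s^i` of a list `S = (s^1, …, s^n)`, `i` being 1-indexed. -/
def sget {n r : ℕ} (S : Fin n → Seq r) (i : ℕ) : Seq r :=
  if h : i - 1 < n then S ⟨i - 1, h⟩ else 0

/-- the condition for `i` to belong to `Des_{R,S}(σ)`:
`s^{σ_i} > s^{σ_{i+1}} − χ(σ_{i+1} < σ_i ∧ σ_{i+1} ≁_R σ_i) − χ(σ_{i+1} > σ_i ∧ σ_i ∼_R σ_{i+1})`. -/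
def desCond {n r : ℕ} (R : Finset ℕ) (S : Fin n → Seq r) (σ : Equiv.Perm (Fin n)) (i : ℕ) :
    Prop :=
  if (pget σ (i+1) < pget σ i ∧ ¬ RNbr R (pget σ (i+1)) (pget σ i)) ∨
      (pget σ i < pget σ (i+1) ∧ RNbr R (pget σ i) (pget σ (i+1)))
  then lexLe (sget S (pget σ (i+1))) (sget S (pget σ i))
  else lexLt (sget S (pget σ (i+1))) (sget S (pget σ i))

/-- `Des_{R,S}(σ) ⊆ {1, …, n−1}` (1-indexed positions). -/
def DesSet {n r : ℕ} (R : Finset ℕ) (S : Fin n → Seq r) (σ : Equiv.Perm (Fin n)) : Finset ℕ :=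
  (Finset.Icc 1 (n-1)).filter (fun i => desCond R S σ i)

/-- `Comaj_{R,S}(σ) = ∑_{i ∈ Des_{R,S}(σ)} (n − i)`. -/
def Comaj {n r : ℕ} (R : Finset ℕ) (S : Fin n → Seq r) (σ : Equiv.Perm (Fin n)) : ℕ :=
  ∑ i ∈ DesSet R S σ, (n - i)

/-- `s^i` is read before `s^j` in the reading order of `S` (with respect to `R`);
`i, j` are 1-indexed. -/
def readBefore {n r : ℕ} (R : Finset ℕ) (S : Fin n → Seq r) (i j : ℕ) : Prop :=
  lexLt (sget S i) (sget S j) ∨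
    (sget S i = sget S j ∧ ((i < j ∧ ¬ RNbr R i j) ∨ (j < i ∧ RNbr R j i)))

/-- `IsReading R S σ` says that the reading permutation `σ_R(S)` equals `σ`,
i.e. `σ` lists `1, …, n` in the reading order of `S`. -/
def IsReading {n r : ℕ} (R : Finset ℕ) (S : Fin n → Seq r) (σ : Equiv.Perm (Fin n)) : Prop :=
  ∀ i ∈ Finset.Icc 1 (n-1), readBefore R S (pget σ i) (pget σ (i+1))

/-- the operator `Z_{R,σ} : (ℕ^r)^n → (ℕ^{r+1})^n`, prepending to `s^v` the number of
descents of `σ` (w.r.t. `R, S`) at positions strictly before the position of `v` in `σ`. -/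
def Zop {n r : ℕ} (R : Finset ℕ) (σ : Equiv.Perm (Fin n)) (S : Fin n → Seq r) :
    Fin n → Seq (r+1) :=
  fun v => Fin.cons ((DesSet R S σ ∩ Finset.Ico 1 ((σ.symm v).val + 1)).card) (S v)

/-- `Zvec R σs i = Z_{R,σ^i} ⋯ Z_{R,σ^1}(∅)` where `σ^{j+1} = σs j`. -/
def Zvec {n : ℕ} (R : Finset ℕ) (σs : ℕ → Equiv.Perm (Fin n)) : (i : ℕ) → Fin n → Seq i
  | 0 => fun _ => (0 : Seq 0)
  | (i+1) => Zop R (σs i) (Zvec R σs i)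

/-- extend a finite vector of permutations to `ℕ`, by the identity. -/
def extFun {n r : ℕ} (σv : Fin r → Equiv.Perm (Fin n)) : ℕ → Equiv.Perm (Fin n) :=
  fun j => if h : j < r then σv ⟨j, h⟩ else 1

/-- `comajI R k σv i = comaj^i_R(σ⃗)` for `1 ≤ i ≤ k`, where `σ⃗ = σv` has length `k−1`
and `σ^k = ε`. -/
def comajI {n : ℕ} (R : Finset ℕ) (k : ℕ) (σv : Fin (k-1) → Equiv.Perm (Fin n)) (i : ℕ) : ℕ :=
  Comaj R (Zvec R (extFun σv) (i-1)) (extFun σv (i-1))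

/-- the exponent of the monomial `q^S` for `S ∈ (ℕ^r)^n` : the (0-indexed) variable `i`
(that is, `q_{i+1}`) records the `(r−i)`-th (0-indexed: `r−1−i`-th) coordinates. -/
def expOf {n r : ℕ} (S : Fin n → Seq r) : Fin r →₀ ℕ :=
  Finsupp.equivFunOnFinite.symm (fun i => ∑ j : Fin n, S j (Fin.rev i))

/-- the formal power series whose coefficient at a monomial `d` counts the elements
`a : α` satisfying `P a d`. -/
def countSeriesP {σty α : Type*} (P : α → (σty →₀ ℕ) → Prop) : MvPowerSeries σty ℤ :=
  fun d => (Nat.card {a : α // P a d} : ℤ)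

/-- `∑_{S ∈ (ℕ^r)^n, P S} q^S`. -/
def countSeries {n r : ℕ} (P : (Fin n → Seq r) → Prop) : MvPowerSeries (Fin r) ℤ :=
  countSeriesP (fun S d => P S ∧ expOf S = d)

/-- the Pochhammer factor `(q_i; q_i)_n = ∏_{j=1}^n (1 − q_i^j)`. -/
def pochOne {r : ℕ} (n : ℕ) (i : Fin r) : MvPowerSeries (Fin r) ℤ :=
  ∏ j ∈ Finset.Icc 1 n, (1 - (MvPowerSeries.X i : MvPowerSeries (Fin r) ℤ) ^ j)

/-- `∏_{i=1}^{r} (q_i; q_i)_n`. -/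
def pochAll (n r : ℕ) : MvPowerSeries (Fin r) ℤ :=
  ∏ i : Fin r, pochOne n i

/-- the exponent of `q_1^{comaj¹_R(σ⃗)} ⋯ q_k^{comaj^k_R(σ⃗)}`. -/
def comajExp {n : ℕ} (R : Finset ℕ) (k : ℕ) (σv : Fin (k-1) → Equiv.Perm (Fin n)) :
    Fin k →₀ ℕ :=
  Finsupp.equivFunOnFinite.symm (fun i => comajI R k σv (i.val + 1))

/-- A standard Young tableau of shape `μ` (with `μ.card` cells), recorded by the
position `pos i` of each (1-indexed) entry `i ∈ {1, …, μ.card}`; entries increase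
left-to-right along rows and down columns (matrix convention), and `pos` is a
bijection from `{1, …, μ.card}` onto the cells of `μ` (normalized by `0` outside). -/
structure SYT (μ : YoungDiagram) where
  pos : ℕ → ℕ × ℕ
  mem : ∀ i ∈ Finset.Icc 1 μ.card, pos i ∈ μ
  inj : ∀ i ∈ Finset.Icc 1 μ.card, ∀ j ∈ Finset.Icc 1 μ.card, pos i = pos j → i = j
  surj : ∀ c ∈ μ, ∃ i ∈ Finset.Icc 1 μ.card, pos i = c
  row_inc : ∀ i ∈ Finset.Icc 1 μ.card, ∀ j ∈ Finset.Icc 1 μ.card,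
    (pos i).1 = (pos j).1 → (pos i).2 < (pos j).2 → i < j
  col_inc : ∀ i ∈ Finset.Icc 1 μ.card, ∀ j ∈ Finset.Icc 1 μ.card,
    (pos i).2 = (pos j).2 → (pos i).1 < (pos j).1 → i < j
  junk : ∀ i, i ∉ Finset.Icc 1 μ.card → pos i = 0

/-- `des(T)` : the set of `i ∈ {1, …, n−1}` such that `i+1` lies in a strictly
higher row of `T` than `i` (in matrix convention: a strictly larger row index). -/
def desSYT {μ : YoungDiagram} (T : SYT μ) : Finset ℕ :=
  (Finset.Icc 1 (μ.card - 1)).filter (fun i => (T.pos i).1 < (T.pos (i+1)).1)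

/-- the ordinary descent set `des(π) = {i : π_i > π_{i+1}}` (1-indexed). -/
def desPerm {n : ℕ} (π : Equiv.Perm (Fin n)) : Finset ℕ :=
  (Finset.Icc 1 (n-1)).filter (fun i => pget π (i+1) < pget π i)

/-- `comaj(π) = ∑_{i ∈ des(π)} (n − i)`. -/
def comajP {n : ℕ} (π : Equiv.Perm (Fin n)) : ℕ :=
  ∑ i ∈ desPerm π, (n - i)


/-- `Z^{(2)}` : delete the first coordinate of each sequence. -/
def tailS {n r : ℕ} (S : Fin n → Seq (r+1)) : Fin n → Seq r :=
  fun v i => S v i.succ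

/-- the exponent of the monomial `q^S` for `S ∈ (ℕ^r)^n`, viewed in the `r+1` variables
`q_1, …, q_{r+1}` (a monomial in `q_1, …, q_r` only). -/
def expTail {n r : ℕ} (S : Fin n → Seq r) : Fin (r+1) →₀ ℕ :=
  Finsupp.equivFunOnFinite.symm (fun i =>
    if h : i.val < r then ∑ j : Fin n, S j (Fin.rev ⟨i.val, h⟩) else 0)

/-!
Read along `σ`, the first coordinates of a list `Z` with `σ_R(Z) = σ` increase weakly, and they
must increase strictly exactly at the descents `Des_{R,S}(σ)` of the list `S = Z^{(2)}` of tails: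
a descent is precisely a position where the tails alone would be read in the wrong order.
Subtracting from each first coordinate the number of earlier descents therefore leaves an
arbitrary weakly increasing sequence of length `n`, i.e. a partition with at most `n` parts, whose
generating function is `1 / (q_r;q_r)_n`, while the subtracted amounts add up to
`Comaj_{R,S}(σ)`. The list `Z_{R,σ}(S)` is the one for which the partition is empty.
-/

section WeightSeries

variable {σ α β : Type*}

def weightSeries (w : α → σ →₀ ℕ) : MvPowerSeries σ ℤ :=
  countSeriesP fun a d => w a = d

lemma coeff_weightSeries (w : α → σ →₀ ℕ) (d : σ →₀ ℕ) :
    MvPowerSeries.coeff d (weightSeries w) = Nat.card {a // w a = d} := rfl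

lemma weightSeries_congr {w₁ : α → σ →₀ ℕ} {w₂ : β → σ →₀ ℕ} (e : α ≃ β)
    (hw : ∀ a, w₂ (e a) = w₁ a) : weightSeries w₁ = weightSeries w₂ := by
  ext d
  rw [coeff_weightSeries, coeff_weightSeries, Nat.card_congr
    (e.subtypeEquiv (p := (w₁ · = d)) (q := (w₂ · = d)) fun a => by rw [hw])]

lemma weightSeries_of_unique [Unique α] (w : α → σ →₀ ℕ) :
    weightSeries w = MvPowerSeries.monomial (w default) 1 := by
  ext d
  rw [coeff_weightSeries, MvPowerSeries.coeff_monomial]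
  split_ifs with h
  · have : Unique {a // w a = d} :=
      ⟨⟨⟨default, h.symm⟩⟩, fun a => Subtype.ext (Unique.eq_default _)⟩
    simp
  · have : IsEmpty {a // w a = d} := ⟨fun a => h (by rw [← a.2, Unique.eq_default a.1])⟩
    simp

lemma monomial_mul_weightSeries (e : σ →₀ ℕ) (w : α → σ →₀ ℕ) :
    MvPowerSeries.monomial e 1 * weightSeries w = weightSeries fun a => e + w a := by
  ext d
  rw [MvPowerSeries.coeff_monomial_mul, coeff_weightSeries, coeff_weightSeries]
  split_ifs with h
  · rw [one_mul, Nat.card_congr (Equiv.subtypeEquivRight fun a => ?_)]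
    rw [eq_tsub_iff_add_eq_of_le h, add_comm]
  · have : IsEmpty {a // e + w a = d} := ⟨fun a => h (a.2 ▸ le_self_add)⟩
    simp

lemma weightSeries_add {w₁ : α → σ →₀ ℕ} {w₂ : β → σ →₀ ℕ}
    (h₁ : ∀ d, Finite {a // w₁ a = d}) (h₂ : ∀ d, Finite {b // w₂ b = d}) :
    weightSeries w₁ + weightSeries w₂ = weightSeries (Sum.elim w₁ w₂) := by
  ext d
  have : Finite {a // Sum.elim w₁ w₂ (Sum.inl a) = d} := h₁ d
  have : Finite {b // Sum.elim w₁ w₂ (Sum.inr b) = d} := h₂ d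
  rw [map_add, coeff_weightSeries, coeff_weightSeries, coeff_weightSeries,
    Nat.card_congr Equiv.subtypeSum, Nat.card_sum]
  push_cast
  rfl

open Finset.HasAntidiagonal in
def antidiagonalSigmaEquiv (w₁ : α → σ →₀ ℕ) (w₂ : β → σ →₀ ℕ) (d : σ →₀ ℕ) :
    {p : α × β // w₁ p.1 + w₂ p.2 = d} ≃
      Σ x : antidiagonal d, {a // w₁ a = x.1.1} × {b // w₂ b = x.1.2} where
  toFun p := ⟨⟨(w₁ p.1.1, w₂ p.1.2), mem_antidiagonal.2 p.2⟩, ⟨p.1.1, rfl⟩, ⟨p.1.2, rfl⟩⟩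
  invFun x := ⟨(x.2.1, x.2.2), by rw [x.2.1.2, x.2.2.2]; exact mem_antidiagonal.1 x.1.2⟩
  left_inv _ := rfl
  right_inv := by
    rintro ⟨⟨⟨e, f⟩, h⟩, ⟨a, ha⟩, ⟨b, hb⟩⟩
    dsimp only at ha hb
    subst ha hb
    rfl

lemma weightSeries_mul {w₁ : α → σ →₀ ℕ} {w₂ : β → σ →₀ ℕ}
    (h₁ : ∀ d, Finite {a // w₁ a = d}) (h₂ : ∀ d, Finite {b // w₂ b = d}) :
    weightSeries w₁ * weightSeries w₂ = weightSeries fun p : α × β => w₁ p.1 + w₂ p.2 := by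
  ext d
  rw [MvPowerSeries.coeff_mul, coeff_weightSeries,
    Nat.card_congr (antidiagonalSigmaEquiv w₁ w₂ d), Nat.card_sigma, ← Finset.sum_coe_sort]
  push_cast [Nat.card_prod, coeff_weightSeries]
  rfl

lemma finite_fiber_add_left {w : α → σ →₀ ℕ} (hw : ∀ d, Finite {a // w a = d}) (e d : σ →₀ ℕ) :
    Finite {a // e + w a = d} :=
  Finite.of_injective
    (fun a => (⟨a.1, eq_tsub_of_add_eq ((add_comm _ _).trans a.2)⟩ : {a // w a = d - e}))
    fun _ _ h => Subtype.ext (congrArg Subtype.val h :)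

lemma finite_of_le_of_injective {γ : Type*} [Preorder γ] [LocallyFiniteOrderBot γ] {p : α → Prop}
    (g : α → γ) (hg : Function.Injective g) (b : γ) (hb : ∀ a, p a → g a ≤ b) :
    Finite {a // p a} :=
  Finite.of_injective (fun a => (⟨g a.1, hb a.1 a.2⟩ : {x // x ≤ b}))
    fun _ _ h => Subtype.ext (hg (congrArg Subtype.val h))

end WeightSeries

section Partitions

variable {σ : Type*}

def partitionSeries (i : σ) (m : ℕ) : MvPowerSeries σ ℤ :=
  weightSeries fun h : {h : Fin m → ℕ // Monotone h} => Finsupp.single i (∑ k, h.1 k)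

lemma finite_partitionSeries_fiber (i : σ) (m : ℕ) (d : σ →₀ ℕ) :
    Finite {h : {h : Fin m → ℕ // Monotone h} // Finsupp.single i (∑ k, h.1 k) = d} :=
  finite_of_le_of_injective (fun h => h.1) Subtype.val_injective (fun _ => d i) fun h hd k => by
    rw [← hd, Finsupp.single_eq_same]
    exact Finset.single_le_sum (fun _ _ => Nat.zero_le _) (Finset.mem_univ k)

lemma monotone_cons_zero {m : ℕ} {h : Fin m → ℕ} (hh : Monotone h) :
    Monotone (Fin.cons 0 h : Fin (m + 1) → ℕ) := by
  intro a b hab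
  cases a using Fin.cases with
  | zero => exact Nat.zero_le _
  | succ a =>
    cases b using Fin.cases with
    | zero => exact absurd hab (by simp)
    | succ b => simpa using hh (Fin.succ_le_succ_iff.1 hab)

/-- A monotone sequence either starts with `0`, or all its terms are positive. -/
def monotoneSuccEquiv (m : ℕ) :
    {h : Fin (m + 1) → ℕ // Monotone h} ⊕ {h : Fin m → ℕ // Monotone h} ≃
      {h : Fin (m + 1) → ℕ // Monotone h} where
  toFun
    | .inl h => ⟨h.1 + 1, fun _ _ hab => Nat.add_le_add_right (h.2 hab) 1⟩
    | .inr h => ⟨Fin.cons 0 h.1, monotone_cons_zero h.2⟩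
  invFun h :=
    if h.1 0 = 0 then .inr ⟨Fin.tail h.1, h.2.comp Fin.strictMono_succ.monotone⟩
    else .inl ⟨h.1 - 1, fun _ _ hab => Nat.sub_le_sub_right (h.2 hab) 1⟩
  left_inv := by
    rintro (h | h)
    · simp only [Pi.add_apply, Pi.one_apply, Nat.add_eq_zero_iff, one_ne_zero, and_false,
        if_false]
      exact congrArg Sum.inl (Subtype.ext (funext fun k => Nat.add_sub_cancel _ _))
    · simp
  right_inv h := by
    by_cases h0 : h.1 0 = 0
    · simp only [h0, if_true]
      apply Subtype.ext
      change Fin.cons 0 (Fin.tail h.1) = h.1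
      rw [← h0, Fin.cons_self_tail]
    · ext k
      have := h.2 (Fin.zero_le k)
      simp [h0]
      omega

lemma partitionSeries_succ (i : σ) (m : ℕ) :
    partitionSeries i (m + 1) =
      MvPowerSeries.monomial (Finsupp.single i (m + 1)) 1 * partitionSeries i (m + 1) +
        partitionSeries i m := by
  rw [partitionSeries, partitionSeries, monomial_mul_weightSeries,
    weightSeries_add (finite_fiber_add_left (finite_partitionSeries_fiber i (m + 1)) _)
      (finite_partitionSeries_fiber i m)]
  refine (weightSeries_congr (monotoneSuccEquiv m) fun h => ?_).symm
  rcases h with h | h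
  · simp [monotoneSuccEquiv, Finset.sum_add_distrib, ← Finsupp.single_add, add_comm]
  · simp [monotoneSuccEquiv]

lemma prod_one_sub_X_pow_mul_partitionSeries (i : σ) (m : ℕ) :
    (∏ j ∈ Finset.Icc 1 m, (1 - MvPowerSeries.X i ^ j)) * partitionSeries i m = 1 := by
  induction m with
  | zero =>
    have : Unique {h : Fin 0 → ℕ // Monotone h} :=
      ⟨⟨⟨default, fun a => a.elim0⟩⟩, fun h => Subtype.ext (Subsingleton.elim _ _)⟩
    simp [partitionSeries, weightSeries_of_unique]
  | succ m ih =>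
    have hstep : (1 - MvPowerSeries.X i ^ (m + 1)) * partitionSeries i (m + 1) =
        partitionSeries i m := by
      rw [sub_mul, one_mul, MvPowerSeries.X_pow_eq]
      exact sub_eq_of_eq_add' (partitionSeries_succ i m)
    rw [Finset.prod_Icc_succ_top (by omega), mul_assoc, hstep, ih]

end Partitions

section LexOrder

variable {r : ℕ} {a b : Seq r}

lemma lexLe_iff_toLex_le : lexLe a b ↔ toLex a ≤ toLex b :=
  (or_congr Iff.rfl toLex_inj.symm).trans (le_iff_lt_or_eq (a := toLex a) (b := toLex b)).symm

lemma not_lexLt_iff : ¬ lexLt a b ↔ lexLe b a :=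
  not_lt.trans lexLe_iff_toLex_le.symm

lemma not_lexLe_iff : ¬ lexLe a b ↔ lexLt b a :=
  lexLe_iff_toLex_le.not.trans not_le

lemma lexLt_cons_iff {x y : ℕ} :
    lexLt (Fin.cons x a : Seq (r + 1)) (Fin.cons y b) ↔ x < y ∨ x = y ∧ lexLt a b :=
  Fin.pi_lex_lt_cons_cons _

end LexOrder

lemma RNbr_comm {R : Finset ℕ} {a b : ℕ} : RNbr R a b ↔ RNbr R b a := by
  rw [RNbr, RNbr, min_comm, max_comm]

section Reading

variable {n r : ℕ} (R : Finset ℕ)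

lemma sget_tailS (Z : Fin n → Seq (r + 1)) (i : ℕ) : sget (tailS Z) i = Fin.tail (sget Z i) := by
  unfold sget tailS
  split_ifs <;> rfl

lemma readBefore_iff_tailS (Z : Fin n → Seq (r + 1)) (a b : ℕ) :
    readBefore R Z a b ↔ sget Z a 0 < sget Z b 0 ∨
      sget Z a 0 = sget Z b 0 ∧ readBefore R (tailS Z) a b := by
  rw [readBefore, readBefore, sget_tailS, sget_tailS, ← Fin.cons_self_tail (sget Z a),
    ← Fin.cons_self_tail (sget Z b), lexLt_cons_iff, Fin.cons_inj]
  simp only [Fin.cons_zero, Fin.tail_cons]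
  tauto

lemma desCond_iff_not_readBefore (S : Fin n → Seq r) (σ : Equiv.Perm (Fin n)) {i : ℕ}
    (h : pget σ i ≠ pget σ (i + 1)) :
    desCond R S σ i ↔ ¬ readBefore R S (pget σ i) (pget σ (i + 1)) := by
  unfold desCond readBefore
  generalize pget σ i = a, pget σ (i + 1) = b at h ⊢
  rw [RNbr_comm (a := b)]
  rcases h.lt_or_gt with hab | hab <;> by_cases hR : RNbr R a b <;>
    simp only [hab, hab.not_gt, hR, and_true, and_false, or_false, false_or,
      not_true, not_false_eq_true, if_true, if_false] <;>
    first | exact not_lexLt_iff.symm | exact not_lexLe_iff.symm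

end Reading

section Descents

variable {n r : ℕ} (R : Finset ℕ) (S : Fin n → Seq r) (σ : Equiv.Perm (Fin n))

def desBefore (k : ℕ) : ℕ :=
  (DesSet R S σ ∩ Finset.Ico 1 (k + 1)).card

lemma Zop_apply (v : Fin n) : Zop R σ S v = Fin.cons (desBefore R S σ (σ.symm v)) (S v) := rfl

lemma mem_DesSet {j : ℕ} : j ∈ DesSet R S σ ↔ (1 ≤ j ∧ j ≤ n - 1) ∧ desCond R S σ j := by
  rw [DesSet, Finset.mem_filter, Finset.mem_Icc]

lemma desBefore_eq_sum (k : ℕ) :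
    desBefore R S σ k = ∑ j ∈ DesSet R S σ, if j ≤ k then 1 else 0 := by
  rw [desBefore, Finset.sum_boole, Nat.cast_id]
  congr 1
  ext j
  simp only [Finset.mem_inter, Finset.mem_Ico, Finset.mem_filter, and_congr_right_iff]
  intro hj
  have := ((mem_DesSet R S σ).1 hj).1.1
  omega

lemma desBefore_zero : desBefore R S σ 0 = 0 := by
  simp [desBefore]

lemma desBefore_succ (k : ℕ) :
    desBefore R S σ (k + 1) = desBefore R S σ k + if k + 1 ∈ DesSet R S σ then 1 else 0 := by
  rw [desBefore_eq_sum, desBefore_eq_sum, ← Finset.sum_ite_eq' _ (k + 1) fun _ => 1,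
    ← Finset.sum_add_distrib]
  refine Finset.sum_congr rfl fun j _ => ?_
  split_ifs <;> omega

lemma sum_desBefore : ∑ k : Fin n, desBefore R S σ k = Comaj R S σ := by
  simp_rw [desBefore_eq_sum]
  rw [Finset.sum_comm, Comaj]
  refine Finset.sum_congr rfl fun j _ => ?_
  rw [Fin.sum_univ_eq_sum_range (fun k => if j ≤ k then 1 else 0), Finset.sum_boole, Nat.cast_id,
    ← Nat.card_Ico j n]
  congr 1
  ext k
  simp only [Finset.mem_filter, Finset.mem_range, Finset.mem_Ico]
  omega

end Descents

section ReadingEquiv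

variable {n r : ℕ} (R : Finset ℕ) (σ : Equiv.Perm (Fin n))

lemma pget_succ (t : Fin n) : pget σ (t + 1) = σ t + 1 := by
  simp [pget]

lemma sget_pget_succ (Z : Fin n → Seq r) (t : Fin n) : sget Z (pget σ (t + 1)) = Z (σ t) := by
  simp [sget, pget_succ]

lemma readBefore_pget_iff (Z : Fin n → Seq (r + 1)) {a b : Fin n} (hab : (b : ℕ) = a + 1) :
    readBefore R Z (pget σ (a + 1)) (pget σ (b + 1)) ↔
      Z (σ a) 0 + desBefore R (tailS Z) σ b ≤ Z (σ b) 0 + desBefore R (tailS Z) σ a := by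
  have hb : pget σ (a + 1 + 1) = pget σ (b + 1) := by rw [hab]
  have hne : pget σ (a + 1) ≠ pget σ (a + 1 + 1) := by
    rw [hb, pget_succ, pget_succ, ne_eq, add_left_inj, Fin.val_inj, σ.injective.eq_iff,
      Fin.ext_iff]
    omega
  have hdes : (a : ℕ) + 1 ∈ DesSet R (tailS Z) σ ↔
      ¬ readBefore R (tailS Z) (pget σ (a + 1)) (pget σ (b + 1)) := by
    rw [mem_DesSet, desCond_iff_not_readBefore R _ σ hne, hb]
    have := b.isLt
    simp only [and_iff_right_iff_imp]
    omega
  have hsucc : desBefore R (tailS Z) σ b =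
      desBefore R (tailS Z) σ a + if (a : ℕ) + 1 ∈ DesSet R (tailS Z) σ then 1 else 0 := by
    rw [hab, desBefore_succ]
  rw [readBefore_iff_tailS, sget_pget_succ, sget_pget_succ, hsucc, if_congr hdes rfl rfl]
  by_cases h : readBefore R (tailS Z) (pget σ (a + 1)) (pget σ (b + 1)) <;> simp [h] <;> omega

lemma isReading_iff_monotone (Z : Fin n → Seq (r + 1)) :
    IsReading R Z σ ↔ Monotone fun k => (Z (σ k) 0 : ℤ) - desBefore R (tailS Z) σ k := by
  rw [monotone_iff_forall_covBy, IsReading]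
  constructor
  · intro H a b hab
    have hb : (b : ℕ) = a + 1 := (Nat.covBy_iff_add_one_eq.1 (Fin.covBy_iff.1 hab)).symm
    have := (readBefore_pget_iff R σ Z hb).1 (hb ▸ H (a + 1) (by simp; omega))
    omega
  · intro H i hi
    obtain ⟨hi1, hin⟩ := Finset.mem_Icc.1 hi
    obtain ⟨t, rfl⟩ : ∃ t, i = t + 1 := ⟨i - 1, by omega⟩
    have := H ⟨t, by omega⟩ ⟨t + 1, by omega⟩ (Fin.covBy_iff.2 (Nat.covBy_iff_add_one_eq.2 rfl))
    exact (readBefore_pget_iff R σ Z (a := ⟨t, by omega⟩) (b := ⟨t + 1, by omega⟩) rfl).2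
      (by omega)

end ReadingEquiv

section Shift

variable {n : ℕ} {D : Fin n → ℕ}

lemma le_of_monotone_sub (hD : ∀ k : Fin n, (k : ℕ) = 0 → D k = 0) {f : Fin n → ℕ}
    (hf : Monotone fun k => (f k : ℤ) - D k) (k : Fin n) : D k ≤ f k := by
  have h0 := hD ⟨0, k.pos⟩ rfl
  have := hf (show (⟨0, k.pos⟩ : Fin n) ≤ k from Nat.zero_le _)
  simp only [h0] at this
  omega

def monotoneShiftEquiv (hD : ∀ k : Fin n, (k : ℕ) = 0 → D k = 0) :
    {h : Fin n → ℕ // Monotone h} ≃ {f : Fin n → ℕ // Monotone fun k => (f k : ℤ) - D k} where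
  toFun h := ⟨h.1 + D, fun a b hab => by simpa using h.2 hab⟩
  invFun f := ⟨f.1 - D, fun a b hab => by
    have := f.2 hab
    dsimp only at this
    have := le_of_monotone_sub hD f.2 a
    have := le_of_monotone_sub hD f.2 b
    simp only [Pi.sub_apply]
    omega⟩
  left_inv h := by ext; simp
  right_inv f := by ext k; exact Nat.sub_add_cancel (le_of_monotone_sub hD f.2 k)

end Shift

section Weights

variable {n r : ℕ} (R : Finset ℕ) (σ : Equiv.Perm (Fin n))

lemma expTail_castSucc (S : Fin n → Seq r) (i : Fin r) :
    expTail S i.castSucc = ∑ j, S j i.rev := by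
  simp [expTail]

lemma expOf_cons (g : Fin n → ℕ) (S : Fin n → Seq r) :
    expOf (fun v => (Fin.cons (g v) (S v) : Seq (r + 1))) =
      expTail S + Finsupp.single (Fin.last r) (∑ v, g v) := by
  ext i
  induction i using Fin.lastCases with
  | last => simp [expOf, expTail]
  | cast i =>
    simp [expOf, expTail_castSucc, Fin.rev_castSucc,
      Finsupp.single_eq_of_ne (Fin.castSucc_lt_last i).ne]

lemma expOf_Zop (S : Fin n → Seq r) :
    expOf (Zop R σ S) = expTail S + Finsupp.single (Fin.last r) (Comaj R S σ) := by
  rw [funext (Zop_apply R S σ), expOf_cons,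
    Equiv.sum_comp σ.symm fun k => desBefore R S σ k, sum_desBefore]

lemma finite_comaj_fiber (d : Fin (r + 1) →₀ ℕ) :
    Finite {S : Fin n → Seq r // expTail S + Finsupp.single (Fin.last r) (Comaj R S σ) = d} :=
  finite_of_le_of_injective id Function.injective_id (fun _ c => d c.rev.castSucc)
    fun S hS j c => by
      change S j c ≤ d c.rev.castSucc
      rw [← hS, Finsupp.add_apply, expTail_castSucc, Fin.rev_rev,
        Finsupp.single_eq_of_ne (Fin.castSucc_lt_last _).ne]
      exact Finset.single_le_sum (f := fun t => S t c) (fun _ _ => Nat.zero_le _)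
        (Finset.mem_univ j)

end Weights

section Main

variable {n r : ℕ} (R : Finset ℕ) (σ : Equiv.Perm (Fin n))

def firstCoordEquiv : (Fin n → Seq (r + 1)) ≃ (Fin n → Seq r) × (Fin n → ℕ) where
  toFun Z := (tailS Z, fun k => Z (σ k) 0)
  invFun p v := Fin.cons (p.2 (σ.symm v)) (p.1 v)
  left_inv Z := funext fun v => by
    change Fin.cons (Z (σ (σ.symm v)) 0) (Fin.tail (Z v)) = Z v
    rw [Equiv.apply_symm_apply, Fin.cons_self_tail]
  right_inv p := by ext <;> simp [tailS]

def readingEquiv :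
    {Z : Fin n → Seq (r + 1) // IsReading R Z σ} ≃
      (Fin n → Seq r) × {h : Fin n → ℕ // Monotone h} :=
  ((firstCoordEquiv σ).subtypeEquiv fun Z => isReading_iff_monotone R σ Z).trans <|
    (Equiv.subtypeProdEquivSigmaSubtype fun S f =>
      Monotone fun k : Fin n => (f k : ℤ) - desBefore R S σ k).trans <|
    (Equiv.sigmaCongrRight fun S =>
      (monotoneShiftEquiv fun k hk => by rw [hk, desBefore_zero]).symm).trans <|
    Equiv.sigmaEquivProd _ _

lemma readingEquiv_symm_apply_coe (S : Fin n → Seq r) (h : {h : Fin n → ℕ // Monotone h}) :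
    ((readingEquiv R σ).symm (S, h)).1 =
      fun v => Fin.cons (h.1 (σ.symm v) + desBefore R S σ (σ.symm v)) (S v) := rfl

lemma countSeries_eq_weightSeries (P : (Fin n → Seq r) → Prop) :
    countSeries P = weightSeries fun Z : {Z // P Z} => expOf Z.1 := by
  ext d
  change (Nat.card _ : ℤ) = Nat.card _
  exact congrArg _ (Nat.card_congr (Equiv.subtypeSubtypeEquivSubtypeInter P (expOf · = d)).symm)

lemma countSeries_isReading :
    countSeries (fun Z : Fin n → Seq (r + 1) => IsReading R Z σ) =
      weightSeries (fun S => expTail S + Finsupp.single (Fin.last r) (Comaj R S σ)) *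
        partitionSeries (Fin.last r) n := by
  rw [countSeries_eq_weightSeries, partitionSeries,
    weightSeries_mul (finite_comaj_fiber R σ) (finite_partitionSeries_fiber _ n)]
  refine (weightSeries_congr (readingEquiv R σ).symm fun ⟨S, h⟩ => ?_).symm
  rw [readingEquiv_symm_apply_coe, expOf_cons, Finset.sum_add_distrib,
    Equiv.sum_comp σ.symm fun k => h.1 k, Equiv.sum_comp σ.symm fun k => desBefore R S σ k,
    sum_desBefore, Finsupp.single_add]
  abel

end Main

theorem general_corollary_general (n r : ℕ)
    (R : Finset ℕ) (σ : Equiv.Perm (Fin n)) :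
    (pochOne n (Fin.last r) *
        countSeries (fun Z : Fin n → Seq (r+1) => IsReading R Z σ) =
      countSeriesP (α := Fin n → Seq r)
        (fun S d => expTail S + Finsupp.single (Fin.last r) (Comaj R S σ) = d)) ∧
    (countSeriesP (α := Fin n → Seq r)
        (fun S d => expTail S + Finsupp.single (Fin.last r) (Comaj R S σ) = d) =
      countSeriesP (α := Fin n → Seq r)
        (fun S d => expOf (Zop R σ S) = d)) := by
  refine ⟨?_, ?_⟩
  · rw [countSeries_isReading, mul_left_comm, pochOne, prod_one_sub_X_pow_mul_partitionSeries,
      mul_one]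
    rfl
  · exact congrArg weightSeries (funext fun S => (expOf_Zop R σ S).symm)

/-- **Corollary.**  In `r+1` variables, for any `R ⊆ {1, …, n−1}` and `σ ∈ S_n`:
`(q_{r+1};q_{r+1})_n ⬝ ∑_{Z ∈ (ℕ^{r+1})^n, σ_R(Z) = σ} q^Z
  = ∑_{S ∈ (ℕ^r)^n} q_{r+1}^{Comaj_{R,S}(σ)} q^S = ∑_{S ∈ (ℕ^r)^n} q^{Z_{R,σ}(S)}`. -/
theorem general_corollary (n r : ℕ) (hn : 1 ≤ n)
    (R : Finset ℕ) (hR : R ⊆ Finset.Icc 1 (n-1)) (σ : Equiv.Perm (Fin n)) :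
    (pochOne n (Fin.last r) *
        countSeries (fun Z : Fin n → Seq (r+1) => IsReading R Z σ) =
      countSeriesP (α := Fin n → Seq r)
        (fun S d => expTail S + Finsupp.single (Fin.last r) (Comaj R S σ) = d)) ∧
    (countSeriesP (α := Fin n → Seq r)
        (fun S d => expTail S + Finsupp.single (Fin.last r) (Comaj R S σ) = d) =
      countSeriesP (α := Fin n → Seq r)
        (fun S d => expOf (Zop R σ S) = d)) :=
  general_corollary_general n r R σ

end

end RomeroComaj
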